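/- arXiv:1901.04002 — 5 statements merged into one kernel-verified Lean document; each statement's English description precedes it below -/
import Mathlib

section
/- Let M ∈ ℝ^{n×n} be symmetric positive definite, A ∈ ℝ^{n×n} arbitrary, let B ∈ ℝ^{m×n} have full row rank m with 1 ≤ m ≤ n, and set ℰ := [[(1/τ)M, 0], [0, 0]] and 𝒜 := [[(1/τ)M + A, Bᵀ], [B, 0]], both in ℝ^{(n+m)×(n+m)}. Then there exists τ₀ > 0 such that for all τ with 0 < τ < τ₀ there exist invertible matrices P, Q ∈ ℝ^{(n+m)×(n+m)}, a matrix J ∈ ℝ^{(n−m)×(n−m)}, and a matrix N ∈ ℝ^{2m×2m} with N² = 0 and N ≠ 0, such that P ℰ Q = [[I_{n−m}, 0], [0, N]] and P 𝒜 Q = [[J, 0], [0, I_{2m}]]. In other words, the implicit-explicit Euler difference-algebraic equation for the semi-discrete Navier–Stokes equations has Kronecker index 2. -/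
/-!
For small `τ` the saddle-point matrix `𝒜` is invertible: after rescaling it depends continuously
on `τ`, and at `τ = 0` it is `[[M, Bᵀ], [B, 0]]`, invertible because `M` is positive definite
and `Bᵀ` is injective. The pencil `(ℰ, 𝒜)` is then equivalent to `(𝒜⁻¹ℰ, I)`, and with
`K = M / τ` the operator `T = 𝒜⁻¹ℰ` sends `(x, p)` to `(G₁ x, G₂ x)`, where `𝒜 (G₁; G₂) = (K; 0)`.
Since `B G₁ = 0` and, by positivity of `K`, `ker G₁ ∩ ker B = 0`, `T` acts invertibly on the
`(n - m)`-dimensional space `T (ker B × 0)`. The remaining `2m` directions are spanned by the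
Jordan chains `(K⁻¹ Bᵀ p, 0) ↦ (0, p) ↦ 0` of `T`, on which `T` is a nilpotent shift of index 2.
-/

open Matrix

section KroneckerForm

variable {R : Type*} [CommRing R] {κ₁ κ₂ κ₃ : Type*}

theorem Matrix.reindex_sumCongr_fromBlocks_zero_zero (f : κ₂ ≃ κ₃) (W : Matrix κ₁ κ₁ R)
    (Z : Matrix κ₂ κ₂ R) :
    reindex (Equiv.sumCongr (Equiv.refl κ₁) f) (Equiv.sumCongr (Equiv.refl κ₁) f)
      (fromBlocks W 0 0 Z) = fromBlocks W 0 0 (reindex f f Z) := by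
  ext (i | i) (j | j) <;> rfl

theorem Matrix.fromBlocks_zero_zero_one_zero_ne_zero [DecidableEq κ₂] [Nontrivial R]
    [Nonempty κ₂] : (fromBlocks 0 0 1 0 : Matrix (κ₂ ⊕ κ₂) (κ₂ ⊕ κ₂) R) ≠ 0 := by
  obtain ⟨i⟩ := ‹Nonempty κ₂›
  intro h
  simpa using congrFun (congrFun h (Sum.inr i)) (Sum.inl i)

variable {ι : Type*} [Fintype κ₁] [DecidableEq κ₁] [Fintype κ₂] [DecidableEq κ₂]

theorem Matrix.fromBlocks_zero_zero_one_zero_sq :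
    (fromBlocks 0 0 1 0 : Matrix (κ₂ ⊕ κ₂) (κ₂ ⊕ κ₂) R) ^ 2 = 0 := by
  rw [sq, fromBlocks_multiply]
  simp

def HasKroneckerForm (E A : Matrix ι ι R) (e : ι ≃ κ₁ ⊕ κ₂) (J : Matrix κ₁ κ₁ R)
    (N : Matrix κ₂ κ₂ R) : Prop :=
  ∃ P Q : Matrix (κ₁ ⊕ κ₂) (κ₁ ⊕ κ₂) R, IsUnit P ∧ IsUnit Q ∧
    P * reindex e e E * Q = fromBlocks 1 0 0 N ∧ P * reindex e e A * Q = fromBlocks J 0 0 1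

theorem HasKroneckerForm.reindex_nilpotent_block [Fintype κ₃] [DecidableEq κ₃]
    {E A : Matrix ι ι R} {e : ι ≃ κ₁ ⊕ κ₂} {J : Matrix κ₁ κ₁ R} {N : Matrix κ₂ κ₂ R}
    (h : HasKroneckerForm E A e J N) (f : κ₂ ≃ κ₃) :
    HasKroneckerForm E A (e.trans (Equiv.sumCongr (Equiv.refl κ₁) f)) J (reindex f f N) := by
  obtain ⟨P, Q, hP, hQ, hE, hA⟩ := h
  set g := Equiv.sumCongr (Equiv.refl κ₁) f
  have hg (X : Matrix ι ι R) :
      reindex (e.trans g) (e.trans g) X = reindexRingEquiv R g (reindex e e X) := rfl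
  refine ⟨reindexRingEquiv R g P, reindexRingEquiv R g Q, hP.map _, hQ.map _, ?_, ?_⟩
  · rw [hg, ← map_mul, ← map_mul, hE]
    exact reindex_sumCongr_fromBlocks_zero_zero ..
  · rw [hg, ← map_mul, ← map_mul, hA, coe_reindexRingEquiv,
      reindex_sumCongr_fromBlocks_zero_zero, reindex_apply, submatrix_one_equiv]

end KroneckerForm

theorem hasKroneckerForm_of_mul_eq_mul_fromBlocks {K : Type*} [Field K] {ι κ₁ κ₂ : Type*}
    [Fintype ι] [DecidableEq ι] [Fintype κ₁] [DecidableEq κ₁] [Fintype κ₂] [DecidableEq κ₂]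
    {E A : Matrix ι ι K} (e : ι ≃ κ₁ ⊕ κ₂) {Q : Matrix ι (κ₁ ⊕ κ₂) K} {C : Matrix κ₁ κ₁ K}
    {N : Matrix κ₂ κ₂ K} (hA : IsUnit A) (hQ : Function.Injective Q.mulVec) (hC : IsUnit C)
    (h : E * Q = A * Q * fromBlocks C 0 0 N) :
    HasKroneckerForm E A e C⁻¹ N := by
  set Q' := Q.submatrix e.symm id
  have hQ' : IsUnit Q' := mulVec_injective_iff_isUnit.mp fun v w hvw => hQ <| funext fun x => by
    simpa [Q', mulVec, dotProduct] using congrFun hvw (e x)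
  set Y := reindex e e A * Q'
  have hY : IsUnit Y := (hA.map (reindexRingEquiv K e)).mul hQ'
  have hEQ : reindex e e E * Q' = Y * fromBlocks C 0 0 N := by
    simp only [Y, Q', reindex_apply, submatrix_mul_equiv]
    rw [h, submatrix_mul _ _ _ (Equiv.refl _) _ (Equiv.refl _).bijective]
    rfl
  have hCC : C⁻¹ * C = 1 := nonsing_inv_mul C ((isUnit_iff_isUnit_det C).mp hC)
  have hYY : Y⁻¹ * Y = 1 := nonsing_inv_mul Y ((isUnit_iff_isUnit_det Y).mp hY)
  refine ⟨fromBlocks C⁻¹ 0 0 1 * Y⁻¹, Q', ?_, hQ', ?_, ?_⟩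
  · refine IsUnit.mul ?_ (isUnit_nonsing_inv_iff.mpr hY)
    rw [isUnit_iff_isUnit_det, det_fromBlocks_zero₂₁, det_one, mul_one, ← isUnit_iff_isUnit_det]
    exact isUnit_nonsing_inv_iff.mpr hC
  · rw [Matrix.mul_assoc, hEQ, Matrix.mul_assoc, ← Matrix.mul_assoc Y⁻¹, hYY, Matrix.one_mul,
      fromBlocks_multiply]
    simp [hCC]
  · rw [Matrix.mul_assoc, Matrix.mul_assoc, hYY, Matrix.mul_one]

section KernelBasis

variable {K : Type*} [Field K] {ι μ : Type*} [Fintype ι]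

theorem Matrix.injective_mulVec_transpose_of_rank_eq [Fintype μ] (B : Matrix μ ι K)
    (hB : B.rank = Fintype.card μ) : Function.Injective Bᵀ.mulVec := by
  rw [mulVec_injective_iff, col_transpose, linearIndependent_iff_card_eq_finrank_span, ← hB,
    rank_eq_finrank_span_row]
  rfl

theorem Matrix.exists_injective_mulVec_range_eq_ker (B : Matrix μ ι K) {k : ℕ}
    (hk : k + B.rank = Fintype.card ι) :
    ∃ V : Matrix ι (Fin k) K, Function.Injective V.mulVec ∧
      LinearMap.range V.mulVecLin = LinearMap.ker B.mulVecLin := by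
  have hker : Module.finrank K (LinearMap.ker B.mulVecLin) = k := by
    have := LinearMap.finrank_range_add_finrank_ker B.mulVecLin
    rw [Module.finrank_fintype_fun_eq_card] at this
    unfold Matrix.rank at hk
    omega
  let b := Module.finBasisOfFinrankEq K _ hker
  have hcol : (of fun j => (b j : ι → K))ᵀ.col = (LinearMap.ker B.mulVecLin).subtype ∘ b := rfl
  refine ⟨(of fun j => (b j : ι → K))ᵀ, ?_, ?_⟩
  · rw [mulVec_injective_iff, hcol]
    exact b.linearIndependent.map' _ (Submodule.ker_subtype _)
  · rw [range_mulVecLin, hcol, Set.range_comp, Submodule.span_image, b.span_eq,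
      Submodule.map_top, Submodule.range_subtype]

end KernelBasis

theorem Matrix.exists_mul_eq_of_col_mem_range {R ι κ p : Type*} [CommRing R] [Fintype κ]
    (V : Matrix ι κ R) (X : Matrix ι p R) (hX : ∀ j, X.col j ∈ LinearMap.range V.mulVecLin) :
    ∃ Y : Matrix κ p R, V * Y = X := by
  choose y hy using hX
  refine ⟨(of y)ᵀ, ?_⟩
  ext i j
  exact congrFun (hy j) i

theorem Matrix.exists_mul_add_mul_eq_of_isUnit_fromBlocks {R ι μ : Type*} [CommRing R] [Fintype ι]
    [DecidableEq ι] [Fintype μ] [DecidableEq μ] {F : Matrix ι ι R} {B : Matrix μ ι R}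
    (hA : IsUnit (fromBlocks F Bᵀ B 0)) (K : Matrix ι ι R) :
    ∃ (G₁ : Matrix ι ι R) (G₂ : Matrix μ ι R), F * G₁ + Bᵀ * G₂ = K ∧ B * G₁ = 0 := by
  have hG := mul_nonsing_inv_cancel_left _ (fromRows K (0 : Matrix μ ι R))
    ((isUnit_iff_isUnit_det _).mp hA)
  rw [← fromRows_toRows ((fromBlocks F Bᵀ B 0)⁻¹ * fromRows K 0), fromBlocks_mul_fromRows,
    Matrix.zero_mul, add_zero] at hG
  exact ⟨_, _, fromRows_inj hG⟩

section SaddlePointMatrix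

variable {ι μ : Type*} [Fintype ι] [Fintype μ]

theorem Matrix.PosDef.eq_zero_of_mulVec_eq_transpose_mulVec {K : Matrix ι ι ℝ} (hK : K.PosDef)
    {B : Matrix μ ι ℝ} {x : ι → ℝ} {p : μ → ℝ} (hBx : B *ᵥ x = 0) (hKx : K *ᵥ x = Bᵀ *ᵥ p) :
    x = 0 := by
  by_contra hx
  have hpos := hK.dotProduct_mulVec_pos hx
  rw [star_trivial, hKx, dotProduct_mulVec, vecMul_transpose, hBx, zero_dotProduct] at hpos
  exact lt_irrefl 0 hpos

variable [DecidableEq ι] [DecidableEq μ]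

theorem Matrix.PosDef.isUnit_fromBlocks_transpose_zero {M : Matrix ι ι ℝ} (hM : M.PosDef)
    {B : Matrix μ ι ℝ} (hB : Function.Injective Bᵀ.mulVec) :
    IsUnit (fromBlocks M Bᵀ B 0) := by
  refine mulVec_injective_iff_isUnit.mp <|
    (injective_iff_map_eq_zero (fromBlocks M Bᵀ B 0).mulVecLin).mpr fun w hw => ?_
  have hw' := congrFun hw
  simp only [mulVecLin_apply, fromBlocks_mulVec, zero_mulVec, add_zero] at hw'
  have htop : M *ᵥ (w ∘ Sum.inl) + Bᵀ *ᵥ (w ∘ Sum.inr) = 0 := funext fun i => hw' (Sum.inl i)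
  have hx : w ∘ Sum.inl = 0 := hM.eq_zero_of_mulVec_eq_transpose_mulVec (p := -(w ∘ Sum.inr))
    (funext fun i => hw' (Sum.inr i)) (by rw [mulVec_neg, eq_neg_iff_add_eq_zero, htop])
  have hp : w ∘ Sum.inr = 0 := hB <| by rwa [hx, mulVec_zero, zero_add, ← mulVec_zero Bᵀ] at htop
  ext (i | i)
  · exact congrFun hx i
  · exact congrFun hp i

theorem Matrix.PosDef.eventually_isUnit_fromBlocks {M : Matrix ι ι ℝ} (hM : M.PosDef)
    {B : Matrix μ ι ℝ} (hB : Function.Injective Bᵀ.mulVec) (A : Matrix ι ι ℝ) :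
    ∀ᶠ τ in nhds (0 : ℝ), IsUnit (fromBlocks (M + τ • A) Bᵀ B 0) := by
  have hcont : Continuous fun τ : ℝ => (fromBlocks (M + τ • A) Bᵀ B 0).det :=
    ((continuous_const.add (continuous_id.smul continuous_const)).matrix_fromBlocks
      continuous_const continuous_const continuous_const).matrix_det
  have h0 : (fromBlocks (M + (0 : ℝ) • A) Bᵀ B 0).det ≠ 0 := by
    rw [zero_smul, add_zero, ← isUnit_iff_ne_zero, ← isUnit_iff_isUnit_det]
    exact hM.isUnit_fromBlocks_transpose_zero hB
  filter_upwards [hcont.continuousAt.eventually_ne h0] with τ hτ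
  rwa [isUnit_iff_isUnit_det, isUnit_iff_ne_zero]

theorem isUnit_fromBlocks_inv_smul_add {M A : Matrix ι ι ℝ} {B : Matrix μ ι ℝ} {τ : ℝ}
    (hτ : τ ≠ 0) (h : IsUnit (fromBlocks (M + τ • A) Bᵀ B 0)) :
    IsUnit (fromBlocks (τ⁻¹ • M + A) Bᵀ B 0) := by
  have hdiag (a b : ℝ) (ha : a ≠ 0) (hb : b ≠ 0) :
      IsUnit (fromBlocks (a • 1 : Matrix ι ι ℝ) 0 0 (b • 1 : Matrix μ μ ℝ)) := by
    rw [isUnit_iff_isUnit_det, det_fromBlocks_zero₂₁, det_smul, det_smul, det_one, det_one]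
    simp [ha, hb]
  have hfac : fromBlocks (τ⁻¹ • M + A) Bᵀ B 0 = fromBlocks (τ⁻¹ • 1) 0 0 ((1 : ℝ) • 1) *
      fromBlocks (M + τ • A) Bᵀ B 0 * fromBlocks ((1 : ℝ) • 1) 0 0 (τ • 1) := by
    simp [fromBlocks_multiply, smul_add, smul_smul, hτ]
  rw [hfac]
  exact ((hdiag _ _ (inv_ne_zero hτ) one_ne_zero).mul h).mul (hdiag _ _ one_ne_zero hτ)

end SaddlePointMatrix

section SaddlePoint

variable {ι μ κ : Type*} [Fintype ι] [Fintype μ] [Fintype κ]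
  {K F G₁ : Matrix ι ι ℝ} {B G₂ : Matrix μ ι ℝ} {V : Matrix ι κ ℝ}

theorem eq_zero_of_mulVec_eq_zero_of_mul_add_mul_eq (hK : K.PosDef)
    (hG : F * G₁ + Bᵀ * G₂ = K) {x : ι → ℝ} (hBx : B *ᵥ x = 0) (hGx : G₁ *ᵥ x = 0) : x = 0 :=
  hK.eq_zero_of_mulVec_eq_transpose_mulVec hBx (p := G₂ *ᵥ x) <| by
    rw [← hG, add_mulVec, ← mulVec_mulVec, ← mulVec_mulVec, hGx, mulVec_zero, zero_add]

theorem exists_isUnit_mul_eq_mul [DecidableEq κ] (hK : K.PosDef) (hG : F * G₁ + Bᵀ * G₂ = K)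
    (hBG : B * G₁ = 0) (hV : Function.Injective V.mulVec)
    (hVB : LinearMap.range V.mulVecLin = LinearMap.ker B.mulVecLin) :
    ∃ C : Matrix κ κ ℝ, IsUnit C ∧ V * C = G₁ * V := by
  obtain ⟨C, hC⟩ := exists_mul_eq_of_col_mem_range V (G₁ * V) fun j => by
    rw [hVB, LinearMap.mem_ker, mulVecLin_apply, ← mulVec_single_one, mulVec_mulVec,
      ← Matrix.mul_assoc, hBG, Matrix.zero_mul, zero_mulVec]
  refine ⟨C, mulVec_injective_iff_isUnit.mp ?_, hC⟩
  refine (injective_iff_map_eq_zero C.mulVecLin).mpr fun a ha => hV ?_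
  have hVa : V *ᵥ a ∈ LinearMap.ker B.mulVecLin := hVB ▸ LinearMap.mem_range_self _ a
  rw [mulVec_zero]
  refine eq_zero_of_mulVec_eq_zero_of_mul_add_mul_eq hK hG hVa ?_
  rw [mulVec_mulVec, ← hC, ← mulVec_mulVec, show C *ᵥ a = 0 from ha, mulVec_zero]

variable [DecidableEq ι] [DecidableEq μ]

/-- The columns are `T (V a, 0)` for `T = 𝒜⁻¹ℰ` and `V` a basis of `ker B`, followed by the
Jordan chains `(K⁻¹ Bᵀ p, 0) ↦ (0, p) ↦ 0` of `T`. -/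
noncomputable def saddlePointKroneckerBasis (K : Matrix ι ι ℝ) (B : Matrix μ ι ℝ)
    (G₁ : Matrix ι ι ℝ) (G₂ : Matrix μ ι ℝ) (V : Matrix ι κ ℝ) :
    Matrix (ι ⊕ μ) (κ ⊕ (μ ⊕ μ)) ℝ :=
  fromBlocks (G₁ * V) (fromCols (K⁻¹ * Bᵀ) 0) (G₂ * V) (fromCols 0 1)

theorem injective_mulVec_saddlePointKroneckerBasis (hK : K.PosDef)
    (hB : Function.Injective Bᵀ.mulVec) (hG : F * G₁ + Bᵀ * G₂ = K) (hBG : B * G₁ = 0)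
    (hV : Function.Injective V.mulVec)
    (hVB : LinearMap.range V.mulVecLin = LinearMap.ker B.mulVecLin) :
    Function.Injective (saddlePointKroneckerBasis K B G₁ G₂ V).mulVec := by
  have hS : Function.Injective (B * K⁻¹ * Bᵀ).mulVec := by
    have := (hK.inv.conjTranspose_mul_mul_same hB).isUnit
    rw [conjTranspose_eq_transpose_of_trivial, transpose_transpose] at this
    exact mulVec_injective_of_isUnit this
  refine (injective_iff_map_eq_zero (saddlePointKroneckerBasis K B G₁ G₂ V).mulVecLin).mpr
    fun w hw => ?_
  set a := w ∘ Sum.inl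
  set p := w ∘ Sum.inr ∘ Sum.inl
  set y := w ∘ Sum.inr ∘ Sum.inr
  have hw' := congrFun hw
  simp only [mulVecLin_apply, saddlePointKroneckerBasis, fromBlocks_mulVec, fromCols_mulVec,
    zero_mulVec, one_mulVec, add_zero, zero_add, ← mulVec_mulVec] at hw'
  have htop : G₁ *ᵥ (V *ᵥ a) + K⁻¹ *ᵥ (Bᵀ *ᵥ p) = 0 := funext fun i => hw' (Sum.inl i)
  have hbot : G₂ *ᵥ (V *ᵥ a) + y = 0 := funext fun i => hw' (Sum.inr i)
  have hp : p = 0 := hS <| by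
    have := congrArg (B *ᵥ ·) htop
    simp only [mulVec_add, mulVec_mulVec, ← Matrix.mul_assoc, hBG, Matrix.zero_mul, zero_mulVec,
      zero_add, mulVec_zero] at this
    rw [this, mulVec_zero]
  have hVa : V *ᵥ a ∈ LinearMap.ker B.mulVecLin := hVB ▸ LinearMap.mem_range_self _ a
  have ha : a = 0 := hV <| by
    rw [mulVec_zero]
    refine eq_zero_of_mulVec_eq_zero_of_mul_add_mul_eq hK hG hVa ?_
    rwa [hp, mulVec_zero, mulVec_zero, add_zero] at htop
  rw [ha, mulVec_zero, mulVec_zero, zero_add] at hbot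
  ext (i | i | i)
  · exact congrFun ha i
  · exact congrFun hp i
  · exact congrFun hbot i

theorem fromBlocks_mul_saddlePointKroneckerBasis (hK : IsUnit K) (hG : F * G₁ + Bᵀ * G₂ = K)
    (hBG : B * G₁ = 0) {C : Matrix κ κ ℝ} (hC : V * C = G₁ * V) :
    fromBlocks K 0 0 (0 : Matrix μ μ ℝ) * saddlePointKroneckerBasis K B G₁ G₂ V =
      fromBlocks F Bᵀ B 0 * saddlePointKroneckerBasis K B G₁ G₂ V *
        fromBlocks C 0 0 (fromBlocks 0 0 1 0 : Matrix (μ ⊕ μ) (μ ⊕ μ) ℝ) := by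
  have hKK : K * K⁻¹ = 1 := mul_nonsing_inv K ((isUnit_iff_isUnit_det K).mp hK)
  rw [saddlePointKroneckerBasis, fromBlocks_multiply, fromBlocks_multiply, fromBlocks_multiply]
  congr 1
  · rw [Matrix.mul_zero, Matrix.zero_mul, add_zero, add_zero, ← Matrix.mul_assoc F,
      ← Matrix.mul_assoc Bᵀ, ← Matrix.add_mul, hG, Matrix.mul_assoc, hC]
  · simp only [mul_fromCols, Matrix.add_mul, fromCols_mul_fromBlocks, ← Matrix.mul_assoc, hKK]
    simp
  · simp [← Matrix.mul_assoc, hBG]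
  · simp only [mul_fromCols, Matrix.add_mul, fromCols_mul_fromBlocks]
    simp

theorem hasKroneckerForm_saddlePoint [DecidableEq κ] (hK : K.PosDef)
    (hA : IsUnit (fromBlocks F Bᵀ B 0)) (hB : Function.Injective Bᵀ.mulVec)
    (hV : Function.Injective V.mulVec)
    (hVB : LinearMap.range V.mulVecLin = LinearMap.ker B.mulVecLin) (e : ι ⊕ μ ≃ κ ⊕ (μ ⊕ μ)) :
    ∃ J, HasKroneckerForm (fromBlocks K 0 0 (0 : Matrix μ μ ℝ)) (fromBlocks F Bᵀ B 0) e J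
      (fromBlocks 0 0 1 0) := by
  obtain ⟨G₁, G₂, hG, hBG⟩ := exists_mul_add_mul_eq_of_isUnit_fromBlocks hA K
  obtain ⟨C, hC, hVC⟩ := exists_isUnit_mul_eq_mul hK hG hBG hV hVB
  exact ⟨C⁻¹, hasKroneckerForm_of_mul_eq_mul_fromBlocks e hA
    (injective_mulVec_saddlePointKroneckerBasis hK hB hG hBG hV hVB) hC
    (fromBlocks_mul_saddlePointKroneckerBasis hK.isUnit hG hBG hVC)⟩

end SaddlePoint

theorem imex_euler_kronecker_index_two_general (n m : ℕ) (hm : 1 ≤ m)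
    (M A : Matrix (Fin n) (Fin n) ℝ) (B : Matrix (Fin m) (Fin n) ℝ)
    (hM : M.PosDef) (hB : B.rank = m) :
    ∃ τ₀ : ℝ, 0 < τ₀ ∧ ∀ τ : ℝ, 0 < τ → τ < τ₀ →
      ∃ (e : (Fin n ⊕ Fin m) ≃ (Fin (n - m) ⊕ Fin (2 * m)))
        (P Q : Matrix (Fin (n - m) ⊕ Fin (2 * m)) (Fin (n - m) ⊕ Fin (2 * m)) ℝ)
        (J : Matrix (Fin (n - m)) (Fin (n - m)) ℝ)
        (N : Matrix (Fin (2 * m)) (Fin (2 * m)) ℝ),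
        IsUnit P ∧ IsUnit Q ∧ N ^ 2 = 0 ∧ N ≠ 0 ∧
        P * (reindex e e
            (fromBlocks ((1 / τ) • M) 0 0 (0 : Matrix (Fin m) (Fin m) ℝ))) * Q =
          fromBlocks 1 0 0 N ∧
        P * (reindex e e (fromBlocks ((1 / τ) • M + A) Bᵀ B 0)) * Q =
          fromBlocks J 0 0 1 := by
  have hmn : m ≤ n := hB ▸ B.rank_le_width
  have hBt := B.injective_mulVec_transpose_of_rank_eq (by rw [hB, Fintype.card_fin])
  obtain ⟨V, hV, hVB⟩ := B.exists_injective_mulVec_range_eq_ker (k := n - m)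
    (by rw [hB, Fintype.card_fin]; omega)
  obtain ⟨τ₀, hτ₀, hsmall⟩ :=
    Metric.eventually_nhds_iff.mp (hM.eventually_isUnit_fromBlocks hBt A)
  refine ⟨τ₀, hτ₀, fun τ hτ hττ₀ => ?_⟩
  have h𝒜 : IsUnit (fromBlocks ((1 / τ) • M + A) Bᵀ B 0) := by
    rw [one_div]
    refine isUnit_fromBlocks_inv_smul_add hτ.ne' (hsmall ?_)
    rwa [Real.dist_0_eq_abs, abs_of_pos hτ]
  obtain ⟨J, hJ⟩ := hasKroneckerForm_saddlePoint (hM.smul (one_div_pos.mpr hτ)) h𝒜 hBt hV hVB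
    (Fintype.equivOfCardEq (by simp only [Fintype.card_sum, Fintype.card_fin]; omega))
  have : Nonempty (Fin m) := ⟨⟨0, hm⟩⟩
  obtain ⟨P, Q, hP, hQ, hE, hA⟩ :=
    hJ.reindex_nilpotent_block (finSumFinEquiv.trans (finCongr (two_mul m).symm))
  refine ⟨_, P, Q, J, _, hP, hQ, ?_, ?_, hE, hA⟩
  · rw [← coe_reindexRingEquiv, ← map_pow, fromBlocks_zero_zero_one_zero_sq, map_zero]
  · rw [← coe_reindexRingEquiv, map_ne_zero_iff _ (reindexRingEquiv ℝ _).injective]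
    exact fromBlocks_zero_zero_one_zero_ne_zero

/-- The implicit-explicit Euler difference-algebraic equation for the semi-discrete
Navier-Stokes equations has Kronecker index 2: for sufficiently small `τ` the pair
`(ℰ, 𝒜)` is equivalent (after reindexing into blocks of sizes `n - m` and `2m`, and via
invertible matrices `P`, `Q`) to the Kronecker form `([[I, 0], [0, N]], [[J, 0], [0, I]])`
with `N² = 0` and `N ≠ 0`. -/
theorem imex_euler_kronecker_index_two (n m : ℕ) (hm : 1 ≤ m) (hmn : m ≤ n)
    (M A : Matrix (Fin n) (Fin n) ℝ) (B : Matrix (Fin m) (Fin n) ℝ)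
    (hM : M.PosDef) (hB : B.rank = m) :
    ∃ τ₀ : ℝ, 0 < τ₀ ∧ ∀ τ : ℝ, 0 < τ → τ < τ₀ →
      ∃ (e : (Fin n ⊕ Fin m) ≃ (Fin (n - m) ⊕ Fin (2 * m)))
        (P Q : Matrix (Fin (n - m) ⊕ Fin (2 * m)) (Fin (n - m) ⊕ Fin (2 * m)) ℝ)
        (J : Matrix (Fin (n - m)) (Fin (n - m)) ℝ)
        (N : Matrix (Fin (2 * m)) (Fin (2 * m)) ℝ),
        IsUnit P ∧ IsUnit Q ∧ N ^ 2 = 0 ∧ N ≠ 0 ∧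
        P * (reindex e e
            (fromBlocks ((1 / τ) • M) 0 0 (0 : Matrix (Fin m) (Fin m) ℝ))) * Q =
          fromBlocks 1 0 0 N ∧
        P * (reindex e e (fromBlocks ((1 / τ) • M + A) Bᵀ B 0)) * Q =
          fromBlocks J 0 0 1 :=
  imex_euler_kronecker_index_two_general n m hm M A B hM hB
end

section
/- Let N ∈ ℝ^{d×d} satisfy N² = 0, let τ > 0, and let (g^k)_{k∈ℕ} be a sequence in ℝ^d. A sequence (x^k)_{k∈ℕ} in ℝ^d satisfies the difference-algebraic equation (1/τ)·N·x^{k+1} = ((1/τ)·N + I)·x^k + g^k for all k ∈ ℕ if and only if x^k = −g^k − (1/τ)·N·(g^{k+1} − g^k) for all k ∈ ℕ. In particular, the solution of this index-2 difference-algebraic equation involves a divided difference of the inhomogeneity amplified by the factor 1/τ. -/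
open Matrix

/-- For a nilpotent `N` with `N² = 0`, the sequence `(x^k)` solves the index-2
difference-algebraic equation `(1/τ) N x^{k+1} = ((1/τ) N + I) x^k + g^k` if and only if
`x^k = -g^k - (1/τ) N (g^{k+1} - g^k)` for all `k`; the solution involves a divided
difference of the inhomogeneity amplified by `1/τ`. -/
theorem index_two_dAE_solution_formula (d : ℕ)
    (N : Matrix (Fin d) (Fin d) ℝ) (hN : N ^ 2 = 0)
    (τ : ℝ) (hτ : 0 < τ) (g x : ℕ → Fin d → ℝ) :
    (∀ k : ℕ, (1 / τ) • (N *ᵥ x (k + 1)) = ((1 / τ) • N + 1) *ᵥ x k + g k) ↔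
    (∀ k : ℕ, x k = -g k - (1 / τ) • (N *ᵥ (g (k + 1) - g k))) := by
  have hτ0 : (1 : ℝ) / τ ≠ 0 := one_div_ne_zero hτ.ne'
  have hNN : ∀ v : Fin d → ℝ, N *ᵥ (N *ᵥ v) = 0 := by
    intro v
    rw [mulVec_mulVec, ← pow_two, hN, zero_mulVec]
  constructor
  · intro h k
    -- first: N x k = - N g k for all k
    have hNx : ∀ k, N *ᵥ x k = -(N *ᵥ g k) := by
      intro k
      have := congrArg (fun v => N *ᵥ v) (h k)
      simp only [mulVec_smul, hNN, smul_zero, add_mulVec, one_mulVec, mulVec_add,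
        smul_mulVec] at this
      simp only [zero_add] at this
      linear_combination (norm := module) -this
    have hk := h k
    rw [add_mulVec, one_mulVec, smul_mulVec, hNx (k + 1), hNx k] at hk
    have : x k = (1 / τ) • -(N *ᵥ g (k + 1)) - (1 / τ) • -(N *ᵥ g k) - g k := by
      linear_combination (norm := module) -hk
    rw [this, mulVec_sub]
    module
  · intro h k
    rw [h k, h (k + 1), add_mulVec, one_mulVec]
    simp only [mulVec_sub, mulVec_neg, mulVec_smul, hNN, smul_zero, mulVec_add,
      smul_mulVec, smul_neg, smul_sub, sub_zero, neg_zero]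
    module
end

section
/- Let M ∈ ℝ^{n×n} be symmetric positive definite, A ∈ ℝ^{n×n} arbitrary, and let B ∈ ℝ^{m×n} have full row rank m. Then there exists τ₀ > 0 such that for all τ with 0 < τ < τ₀, the matrix (1/τ)·M + A ∈ ℝ^{n×n} is invertible and the matrix S_A := B·((1/τ)·M + A)⁻¹·Bᵀ ∈ ℝ^{m×m} is invertible. -/
/-!
Since `(1/τ) • M + A = τ⁻¹ • (M + τ • A)`, both claims reduce to the invertibility of `M + τ • A`
and of `B * (M + τ • A)⁻¹ * Bᵀ` for small `τ`. At `τ = 0` these are `M` and `B * M⁻¹ * Bᵀ`, both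
positive definite because `B` has full row rank, and invertibility persists near `τ = 0` because
the determinant and the matrix inverse are continuous there.
-/

open Matrix Filter Topology

section

variable {X 𝕜 : Type*} {n : Type*} [Fintype n] [DecidableEq n] [TopologicalSpace X]
  [Field 𝕜] [TopologicalSpace 𝕜] [IsTopologicalDivisionRing 𝕜] {f : X → Matrix n n 𝕜} {x : X}

theorem ContinuousAt.matrix_inv_of_isUnit (hf : ContinuousAt f x) (hx : IsUnit (f x)) :
    ContinuousAt (fun y => (f y)⁻¹) x := by
  refine (continuousAt_matrix_inv _ ?_).comp hf
  rw [Ring.inverse_eq_inv']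
  exact continuousAt_inv₀ ((isUnit_iff_isUnit_det _).mp hx).ne_zero

theorem ContinuousAt.eventually_isUnit_matrix [T1Space 𝕜] (hf : ContinuousAt f x)
    (hx : IsUnit (f x)) : ∀ᶠ y in 𝓝 x, IsUnit (f y) := by
  simp only [isUnit_iff_isUnit_det, isUnit_iff_ne_zero] at hx ⊢
  exact (continuous_id.matrix_det.continuousAt.comp hf).eventually_ne hx

end

namespace Matrix

variable {m n K : Type*} [Fintype m] [Fintype n] [Field K]

theorem vecMul_injective_of_rank_eq_card {B : Matrix m n K} (hB : B.rank = Fintype.card m) :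
    Function.Injective B.vecMul := by
  rw [vecMul_injective_iff, linearIndependent_iff_card_eq_finrank_span]
  exact hB.symm.trans (rank_eq_finrank_span_row B)

theorem isUnit_mul_inv_smul_mul_iff [DecidableEq m] [DecidableEq n] {X : Matrix n n K}
    (hX : IsUnit X) (u : Kˣ) (B : Matrix m n K) (C : Matrix n m K) :
    IsUnit (B * (u • X)⁻¹ * C) ↔ IsUnit (B * X⁻¹ * C) := by
  rw [inv_smul' X u ((isUnit_iff_isUnit_det X).mp hX), Units.smul_def, Matrix.mul_smul,
    Matrix.smul_mul, ← Units.smul_def, isUnit_smul_iff]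

end Matrix

/-- For `M` symmetric positive definite, `A` arbitrary and `B` of full row rank, there exists
`τ₀ > 0` such that for all `0 < τ < τ₀` the matrix `(1/τ)M + A` is invertible and the SIMPLE
Schur complement `S_A = B ((1/τ)M + A)⁻¹ Bᵀ` is invertible. -/
theorem simple_schur_complement_invertible (n m : ℕ)
    (M A : Matrix (Fin n) (Fin n) ℝ) (B : Matrix (Fin m) (Fin n) ℝ)
    (hM : M.PosDef) (hB : B.rank = m) :
    ∃ τ₀ : ℝ, 0 < τ₀ ∧ ∀ τ : ℝ, 0 < τ → τ < τ₀ →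
      IsUnit ((1 / τ) • M + A) ∧
      IsUnit (B * ((1 / τ) • M + A)⁻¹ * Bᵀ) := by
  have hcont : Continuous fun τ : ℝ => M + τ • A := by fun_prop
  have hS₀ : (B * M⁻¹ * Bᵀ).PosDef := by
    simpa [conjTranspose_eq_transpose_of_trivial] using
      hM.inv.mul_mul_conjTranspose_same
        (vecMul_injective_of_rank_eq_card (by rw [hB, Fintype.card_fin]))
  have hM₀ : IsUnit (M + (0 : ℝ) • A) := by simpa using hM.isUnit
  have hsmall : ∀ᶠ τ in 𝓝[>] (0 : ℝ),
      IsUnit (M + τ • A) ∧ IsUnit (B * (M + τ • A)⁻¹ * Bᵀ) := by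
    refine nhdsWithin_le_nhds ((hcont.continuousAt.eventually_isUnit_matrix hM₀).and ?_)
    refine ContinuousAt.eventually_isUnit_matrix ?_ (by simpa using hS₀.isUnit)
    have hsandwich : Continuous fun Y : Matrix (Fin n) (Fin n) ℝ => B * Y * Bᵀ :=
      (continuous_const.matrix_mul continuous_id).matrix_mul continuous_const
    exact hsandwich.continuousAt.comp (hcont.continuousAt.matrix_inv_of_isUnit hM₀)
  obtain ⟨τ₀, hτ₀, hsub⟩ := mem_nhdsGT_iff_exists_Ioo_subset.mp hsmall
  refine ⟨τ₀, hτ₀, fun τ hτ hττ₀ => ?_⟩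
  obtain ⟨hunit, hschur⟩ := hsub ⟨hτ, hττ₀⟩
  have hscale : (1 / τ) • M + A = (Units.mk0 τ hτ.ne')⁻¹ • (M + τ • A) := by
    simp [smul_add, Units.smul_def, smul_smul, hτ.ne']
  rw [hscale, isUnit_smul_iff, isUnit_mul_inv_smul_mul_iff hunit]
  exact ⟨hunit, hschur⟩
end

section
/- Let M ∈ ℝ^{n×n} be symmetric positive definite, A ∈ ℝ^{n×n}, and let B ∈ ℝ^{m×n} have full row rank m. Then there exists τ₀ > 0 such that for all τ with 0 < τ < τ₀ the following holds: (1/τ)M + A and S_A := B((1/τ)M + A)⁻¹Bᵀ are invertible, and for the coefficient pair (ℰ, 𝒜) of the SIMPLE scheme, given in 4×4 block form (with block sizes n, m, n, m) by ℰ = [[(1/τ)M, 0, 0, 0], [0, 0, 0, 0], [I, ((1/τ)M + A)⁻¹Bᵀ, −I, 0], [0, −I, 0, I]] and 𝒜 = [[0, (1/τ)M + A, 0, Bᵀ], [−B, −S_A, 0, 0], [0, 0, 0, 0], [0, 0, 0, I]], there exist invertible matrices P, Q ∈ ℝ^{(2n+2m)×(2n+2m)} and a matrix J ∈ ℝ^{(2n+m)×(2n+m)}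 such that P ℰ Q = [[I_{2n+m}, 0], [0, 0]] and P 𝒜 Q = [[J, 0], [0, I_m]]. In other words, the difference-algebraic equation of the SIMPLE scheme has Kronecker index 1. -/
/-!
For `τ ≠ 0`, `(1/τ)M + A = (1/τ)(M + τA)` and `S_A = τ B (M + τA)⁻¹ Bᵀ`, so it suffices that
`M + τA` and `B (M + τA)⁻¹ Bᵀ` are invertible near `τ = 0`; by continuity this follows from
`τ = 0`, where `B M⁻¹ Bᵀ` is positive definite because `M⁻¹` is and `B` has full row rank.

Explicit row and column operations `P`, `Q` then decouple the variable `p_Δ`: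
`P ℰ Q = diag(I, 0, I, I)`, while `P 𝒜 Q` has unit vectors as its `p_Δ` row and column.
Moving `p_Δ` to the last block gives the normal form.
-/

open Matrix Topology

section Regroup

variable {α : Type*} [Zero α] {n m k l : Type*}

def moveSecondBlockLast (n m : Type*) : (n ⊕ m) ⊕ (n ⊕ m) ≃ (n ⊕ (n ⊕ m)) ⊕ m :=
  (Equiv.sumAssoc n m (n ⊕ m)).trans <|
    ((Equiv.refl n).sumCongr (Equiv.sumComm m (n ⊕ m))).trans (Equiv.sumAssoc n (n ⊕ m) m).symm

theorem reindex_moveSecondBlockLast_fromBlocks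
    (X₁₁ X₁₃ X₃₁ X₃₃ : Matrix n n α) (X₁₄ X₃₄ : Matrix n m α) (X₄₁ X₄₃ : Matrix m n α)
    (X₄₄ D : Matrix m m α) :
    reindex (moveSecondBlockLast n m) (moveSecondBlockLast n m)
      (fromBlocks (fromBlocks X₁₁ 0 0 D) (fromBlocks X₁₃ X₁₄ 0 0)
        (fromBlocks X₃₁ 0 X₄₁ 0) (fromBlocks X₃₃ X₃₄ X₄₃ X₄₄)) =
    fromBlocks (fromBlocks X₁₁ (fromCols X₁₃ X₁₄) (fromRows X₃₁ X₄₁)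
        (fromBlocks X₃₃ X₃₄ X₄₃ X₄₄)) 0 0 D := by
  ext ((_ | _ | _) | _) ((_ | _ | _) | _) <;> rfl

theorem reindex_sumCongr_fromBlocks_zero (f : l ≃ k) (J : Matrix l l α)
    (D : Matrix m m α) :
    reindex (f.sumCongr (Equiv.refl m)) (f.sumCongr (Equiv.refl m)) (fromBlocks J 0 0 D) =
      fromBlocks (reindex f f J) 0 0 D := by
  ext (_ | _) (_ | _) <;> rfl

end Regroup

section NormalForm

variable {R : Type*} [CommRing R] {ι k l : Type*} [Fintype ι] [DecidableEq ι]
  [Fintype k] [DecidableEq k] [Fintype l] [DecidableEq l]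

def HasIndexOneNormalForm (E A : Matrix (k ⊕ l) (k ⊕ l) R) : Prop :=
  ∃ (P Q : Matrix (k ⊕ l) (k ⊕ l) R) (J : Matrix k k R), IsUnit P ∧ IsUnit Q ∧
    P * E * Q = fromBlocks 1 0 0 0 ∧ P * A * Q = fromBlocks J 0 0 1

theorem hasIndexOneNormalForm_reindex {E A P Q : Matrix ι ι R} {J : Matrix k k R}
    (g : ι ≃ k ⊕ l) (hP : IsUnit P) (hQ : IsUnit Q)
    (hE : reindex g g (P * E * Q) = fromBlocks 1 0 0 0)
    (hA : reindex g g (P * A * Q) = fromBlocks J 0 0 1) :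
    HasIndexOneNormalForm (reindex g g E) (reindex g g A) := by
  refine ⟨reindex g g P, reindex g g Q, J, hP.map (reindexAlgEquiv R R g),
    hQ.map (reindexAlgEquiv R R g), ?_, ?_⟩ <;>
  rwa [← coe_reindexAlgEquiv R R, ← map_mul, ← map_mul]

theorem HasIndexOneNormalForm.reindex_sumCongr {k' : Type*} [Fintype k'] [DecidableEq k']
    {E A : Matrix (k ⊕ l) (k ⊕ l) R} (h : HasIndexOneNormalForm E A) (f : k ≃ k') :
    HasIndexOneNormalForm (reindex (f.sumCongr (Equiv.refl l)) (f.sumCongr (Equiv.refl l)) E)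
      (reindex (f.sumCongr (Equiv.refl l)) (f.sumCongr (Equiv.refl l)) A) := by
  obtain ⟨P, Q, J, hP, hQ, hE, hA⟩ := h
  refine hasIndexOneNormalForm_reindex (J := reindex f f J) _ hP hQ ?_ ?_
  · rw [hE, reindex_sumCongr_fromBlocks_zero, reindex_apply, submatrix_one_equiv]
  · rw [hA, reindex_sumCongr_fromBlocks_zero]

end NormalForm

section SimpleScheme

variable {R : Type*} [CommRing R] {n m : Type*} [Fintype n] [DecidableEq n]
  [Fintype m] [DecidableEq m]

/-- `ℰ` and `𝒜` of the SIMPLE scheme in the variables `(ṽ, p_Δ, v, p)`, with `W = (1/τ)M`,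
`C = (1/τ)M + A` and `S = S_A`. -/
noncomputable def simpleE (W C : Matrix n n R) (B : Matrix m n R) :
    Matrix ((n ⊕ m) ⊕ (n ⊕ m)) ((n ⊕ m) ⊕ (n ⊕ m)) R :=
  fromBlocks (fromBlocks W 0 0 0) 0 (fromBlocks 1 (C⁻¹ * Bᵀ) 0 (-1)) (fromBlocks (-1) 0 0 1)

def simpleA (C : Matrix n n R) (B : Matrix m n R) (S : Matrix m m R) :
    Matrix ((n ⊕ m) ⊕ (n ⊕ m)) ((n ⊕ m) ⊕ (n ⊕ m)) R :=
  fromBlocks (fromBlocks 0 0 (-B) (-S)) (fromBlocks C Bᵀ 0 0) 0 (fromBlocks 0 0 0 1)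

/-- The `p_Δ` column of `Q` spans `ker ℰ` and its `ṽ` column clears `-B` from the `p_Δ` row
of `𝒜`. Then `P` is forced by `P ℰ Q = diag(I, 0, I, I)` and by clearing the `p_Δ` column
`(2Bᵀ, -S, 0, I)` of `𝒜 Q`. -/
noncomputable def simpleP (W : Matrix n n R) (B : Matrix m n R) (S : Matrix m m R) :
    Matrix ((n ⊕ m) ⊕ (n ⊕ m)) ((n ⊕ m) ⊕ (n ⊕ m)) R :=
  fromBlocks (fromBlocks W⁻¹ (2 • (W⁻¹ * Bᵀ * S⁻¹)) 0 (-S⁻¹)) 0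
    (fromBlocks W⁻¹ (2 • (W⁻¹ * Bᵀ * S⁻¹)) 0 S⁻¹) (fromBlocks (-1) 0 0 1)

noncomputable def simpleQ (C : Matrix n n R) (B : Matrix m n R) (S : Matrix m m R) :
    Matrix ((n ⊕ m) ⊕ (n ⊕ m)) ((n ⊕ m) ⊕ (n ⊕ m)) R :=
  fromBlocks (fromBlocks 1 0 (-(S⁻¹ * B)) 1) 0
    (fromBlocks (-(C⁻¹ * Bᵀ * S⁻¹ * B)) (C⁻¹ * Bᵀ) (-(S⁻¹ * B)) 1) 1

variable {W C : Matrix n n R} {B : Matrix m n R} {S : Matrix m m R}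

variable (C B S) in
theorem isUnit_simpleQ : IsUnit (simpleQ C B S) := by
  simp [simpleQ, isUnit_iff_isUnit_det]

variable (B) in
theorem isUnit_simpleP (hW : IsUnit W) (hS : IsUnit S) : IsUnit (simpleP W B S) := by
  simp [simpleP, isUnit_iff_isUnit_det, det_fromBlocks_zero₁₂, det_fromBlocks_zero₂₁, det_neg,
    (isUnit_iff_isUnit_det _).mp hW, (isUnit_iff_isUnit_det _).mp hS, (isUnit_one.neg).pow]

theorem simpleP_mul_simpleE_mul_simpleQ (hW : IsUnit W) :
    simpleP W B S * simpleE W C B * simpleQ C B S = fromBlocks (fromBlocks 1 0 0 0) 0 0 1 := by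
  have := hW.invertible
  simp [simpleP, simpleQ, simpleE, fromBlocks_multiply, fromBlocks_add, Matrix.mul_assoc]

theorem simpleP_mul_simpleA_mul_simpleQ (hC : IsUnit C) (hS : IsUnit S) :
    simpleP W B S * simpleA C B S * simpleQ C B S =
      let X := -(2 • (W⁻¹ * Bᵀ * S⁻¹ * B))
      fromBlocks (fromBlocks X 0 0 1) (fromBlocks (W⁻¹ * C) (W⁻¹ * Bᵀ) 0 0)
        (fromBlocks X 0 (-(S⁻¹ * B)) 0) (fromBlocks (W⁻¹ * C) (W⁻¹ * Bᵀ) 0 1) := by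
  have := hC.invertible
  have := hS.invertible
  simp [simpleP, simpleQ, simpleA, fromBlocks_multiply, fromBlocks_add, Matrix.mul_assoc,
    Matrix.add_mul, two_smul]

theorem hasIndexOneNormalForm_simple (hW : IsUnit W) (hC : IsUnit C) (hS : IsUnit S) :
    HasIndexOneNormalForm
      (reindex (moveSecondBlockLast n m) (moveSecondBlockLast n m) (simpleE W C B))
      (reindex (moveSecondBlockLast n m) (moveSecondBlockLast n m) (simpleA C B S)) := by
  apply hasIndexOneNormalForm_reindex _ (isUnit_simpleP B hW hS) (isUnit_simpleQ C B S)
  · rw [simpleP_mul_simpleE_mul_simpleQ hW]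
    ext ((_ | _ | _) | _) ((_ | _ | _) | _) <;> simp [moveSecondBlockLast, one_apply]
  · rw [simpleP_mul_simpleA_mul_simpleQ hC hS, reindex_moveSecondBlockLast_fromBlocks]

end SimpleScheme

section Perturbation

variable {n m : Type*} [Fintype n] [DecidableEq n] [Fintype m] [DecidableEq m]

theorem eventually_isUnit_of_continuousAt {𝕜 X : Type*} [NormedField 𝕜] [TopologicalSpace X]
    {f : X → Matrix n n 𝕜} {x : X} (hf : ContinuousAt f x) (hx : IsUnit (f x)) :
    ∀ᶠ y in 𝓝 x, IsUnit (f y) := by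
  have hdet : ContinuousAt (fun y => (f y).det) x := continuous_id.matrix_det.continuousAt.comp hf
  filter_upwards [hdet.eventually_ne ((isUnit_iff_isUnit_det _).mp hx).ne_zero] with y hy
  exact (isUnit_iff_isUnit_det _).mpr hy.isUnit

theorem eventually_isUnit_add_smul_and_schur {𝕜 : Type*} [NormedField 𝕜] {M : Matrix n n 𝕜}
    (A : Matrix n n 𝕜) (B : Matrix m n 𝕜) (hM : IsUnit M) (hS : IsUnit (B * M⁻¹ * Bᵀ)) :
    ∀ᶠ τ in 𝓝 (0 : 𝕜), IsUnit (M + τ • A) ∧ IsUnit (B * (M + τ • A)⁻¹ * Bᵀ) := by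
  have hN : Continuous fun τ : 𝕜 => M + τ • A := by fun_prop
  have hinv : ContinuousAt (fun τ : 𝕜 => (M + τ • A)⁻¹) 0 := by
    refine (continuousAt_matrix_inv _ ?_).comp hN.continuousAt
    rw [Ring.inverse_eq_inv']
    exact continuousAt_inv₀ (by simpa using ((isUnit_iff_isUnit_det _).mp hM).ne_zero)
  have hschur : ContinuousAt (fun τ : 𝕜 => B * (M + τ • A)⁻¹ * Bᵀ) 0 :=
    ((continuous_const.matrix_mul continuous_id).matrix_mul continuous_const).continuousAt.comp
      hinv
  exact (eventually_isUnit_of_continuousAt hN.continuousAt (by simpa using hM)).and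
    (eventually_isUnit_of_continuousAt hschur (by simpa using hS))

theorem isUnit_one_div_smul_add_and_schur {K : Type*} [Field K] {M A : Matrix n n K}
    {B : Matrix m n K} {τ : K} (hτ : τ ≠ 0) (hN : IsUnit (M + τ • A))
    (hS : IsUnit (B * (M + τ • A)⁻¹ * Bᵀ)) :
    IsUnit ((1 / τ) • M + A) ∧ IsUnit (B * ((1 / τ) • M + A)⁻¹ * Bᵀ) := by
  have hscale : (1 / τ) • M + A = (1 / τ) • (M + τ • A) := by
    rw [smul_add, smul_smul, one_div_mul_cancel hτ, one_smul]
  have hinv : ((1 / τ) • (M + τ • A))⁻¹ = τ • (M + τ • A)⁻¹ := by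
    refine inv_eq_left_inv ?_
    rw [smul_mul_smul_comm, mul_one_div_cancel hτ, one_smul,
      nonsing_inv_mul _ ((isUnit_iff_isUnit_det _).mp hN)]
  rw [hscale, hinv, Matrix.mul_smul, Matrix.smul_mul]
  exact ⟨hN.smul (Units.mk0 _ (one_div_ne_zero hτ)), hS.smul (Units.mk0 τ hτ)⟩

end Perturbation

theorem Matrix.PosDef.mul_mul_transpose_of_rank_eq {n m : Type*} [Fintype n] [Fintype m]
    {M : Matrix n n ℝ} (hM : M.PosDef) {B : Matrix m n ℝ} (hB : B.rank = Fintype.card m) :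
    (B * M * Bᵀ).PosDef := by
  have hrow : LinearIndependent ℝ B.row :=
    linearIndependent_iff_card_eq_finrank_span.mpr (by rw [← hB, rank_eq_finrank_span_row]; rfl)
  simpa [conjTranspose_eq_transpose_of_trivial] using
    hM.mul_mul_conjTranspose_same (vecMul_injective_iff.mpr hrow)

/-- The difference-algebraic equation of the SIMPLE scheme has Kronecker index 1: for
sufficiently small `τ`, `(1/τ)M + A` and `S_A = B ((1/τ)M + A)⁻¹ Bᵀ` are invertible, and the
coefficient pair `(ℰ, 𝒜)`, given in 4×4 block form with block sizes `n, m, n, m` by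
`ℰ = [[(1/τ)M, 0, 0, 0], [0, 0, 0, 0], [I, ((1/τ)M + A)⁻¹Bᵀ, -I, 0], [0, -I, 0, I]]` and
`𝒜 = [[0, 0, (1/τ)M + A, Bᵀ], [-B, -S_A, 0, 0], [0, 0, 0, 0], [0, 0, 0, I]]`
(the block `(1/τ)M + A` of size n×n is placed in the n-sized column block, which is the
only dimensionally consistent placement), is equivalent via invertible `P`, `Q` (after
reindexing into blocks of sizes `2n + m` and `m`) to `([[I, 0], [0, 0]], [[J, 0], [0, I]])`. -/
theorem simple_scheme_kronecker_index_one (n m : ℕ)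
    (M A : Matrix (Fin n) (Fin n) ℝ) (B : Matrix (Fin m) (Fin n) ℝ)
    (hM : M.PosDef) (hB : B.rank = m) :
    ∃ τ₀ : ℝ, 0 < τ₀ ∧ ∀ τ : ℝ, 0 < τ → τ < τ₀ →
      IsUnit ((1 / τ) • M + A) ∧
      IsUnit (B * ((1 / τ) • M + A)⁻¹ * Bᵀ) ∧
      ∃ (e : ((Fin n ⊕ Fin m) ⊕ (Fin n ⊕ Fin m)) ≃ (Fin (2 * n + m) ⊕ Fin m))
        (P Q : Matrix (Fin (2 * n + m) ⊕ Fin m) (Fin (2 * n + m) ⊕ Fin m) ℝ)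
        (J : Matrix (Fin (2 * n + m)) (Fin (2 * n + m)) ℝ),
        IsUnit P ∧ IsUnit Q ∧
        P * (reindex e e (fromBlocks
            (fromBlocks ((1 / τ) • M) 0 0 0) (0 : Matrix (Fin n ⊕ Fin m) (Fin n ⊕ Fin m) ℝ)
            (fromBlocks 1 (((1 / τ) • M + A)⁻¹ * Bᵀ) 0 (-1)) (fromBlocks (-1) 0 0 1))) * Q =
          fromBlocks 1 0 0 0 ∧
        P * (reindex e e (fromBlocks
            (fromBlocks 0 0 (-B) (-(B * ((1 / τ) • M + A)⁻¹ * Bᵀ)))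
            (fromBlocks ((1 / τ) • M + A) Bᵀ 0 0)
            (0 : Matrix (Fin n ⊕ Fin m) (Fin n ⊕ Fin m) ℝ) (fromBlocks 0 0 0 1))) * Q =
          fromBlocks J 0 0 1 := by
  have hS₀ : IsUnit (B * M⁻¹ * Bᵀ) :=
    (hM.inv.mul_mul_transpose_of_rank_eq (by rwa [Fintype.card_fin])).isUnit
  obtain ⟨τ₀, hτ₀, hsmall⟩ :=
    Metric.eventually_nhds_iff.mp (eventually_isUnit_add_smul_and_schur A B hM.isUnit hS₀)
  refine ⟨τ₀, hτ₀, fun τ hτ hττ₀ => ?_⟩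
  obtain ⟨hN, hSN⟩ := hsmall (by rwa [Real.dist_0_eq_abs, abs_of_pos hτ])
  obtain ⟨hC, hS⟩ := isUnit_one_div_smul_add_and_schur hτ.ne' hN hSN
  let f : Fin n ⊕ (Fin n ⊕ Fin m) ≃ Fin (2 * n + m) :=
    ((Equiv.refl _).sumCongr finSumFinEquiv).trans (finSumFinEquiv.trans (finCongr (by ring)))
  exact ⟨hC, hS, (moveSecondBlockLast _ _).trans (f.sumCongr (Equiv.refl _)),
    (hasIndexOneNormalForm_simple (hM.isUnit.smul (Units.mk0 _ (one_div_ne_zero hτ.ne'))) hC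
      hS).reindex_sumCongr f⟩
end

section
/- Let M ∈ ℝ^{n×n} be symmetric positive definite, K ∈ ℝ^{n×n} arbitrary, let B ∈ ℝ^{m×n} have full row rank m with m ≤ n, and let C ∈ ℝ^{n×(n−m)} satisfy B·C = 0 and rank C = n − m. Define C₂ := −(B M⁻¹ Bᵀ)⁻¹·B·M⁻¹·K·C ∈ ℝ^{m×(n−m)}, the stacked matrix T₂ := [C; C₂] ∈ ℝ^{(n+m)×(n−m)}, and Â₂ := [[B, 0], [B M⁻¹ K, B M⁻¹ Bᵀ]] ∈ ℝ^{2m×(n+m)}. Then Â₂·T₂ = 0, rank T₂ = n − m, and the column space of T₂ equals the kernel of the linear map x ↦ Â₂·x on ℝ^{n+m}. -/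
/-!
Since `B` has full row rank and `M⁻¹` is positive definite, `S = B M⁻¹ Bᵀ` is positive definite,
hence invertible. `Â₂` is block lower triangular with diagonal blocks `B` and `S`, so `(u, v)` lies
in its kernel iff `B u = 0` and `v = -S⁻¹ B M⁻¹ K u`. By rank–nullity the columns of `C` span
`ker B`, so this kernel is exactly the column space of `T₂ = [C; C₂]`; and `T₂` has full column
rank because its top block `C` does.
-/

open Matrix Module

namespace Matrix

variable {R : Type*} [Field R] {m n p q : Type*}

theorem rank_eq_card_width_iff_mulVec_injective [Fintype n] {A : Matrix m n R} :
    A.rank = Fintype.card n ↔ Function.Injective A.mulVec := by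
  rw [mulVec_injective_iff, linearIndependent_iff_card_eq_finrank_span, rank_eq_finrank_span_cols,
    eq_comm]
  rfl

theorem vecMul_injective_of_rank_eq_card_height [Fintype m] [Fintype n] {A : Matrix m n R}
    (hA : A.rank = Fintype.card m) : Function.Injective A.vecMul := by
  intro v w hvw
  apply rank_eq_card_width_iff_mulVec_injective.1 ((rank_transpose A).trans hA)
  simpa only [mulVec_transpose] using hvw

theorem PosDef.mul_mul_transpose_of_rank_eq_s18 [PartialOrder R] [StarRing R] [StarOrderedRing R]
    [TrivialStar R] [Fintype m] [Fintype n] {A : Matrix n n R} (hA : A.PosDef)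
    {B : Matrix m n R} (hB : B.rank = Fintype.card m) : (B * A * Bᵀ).PosDef := by
  simpa using hA.mul_mul_conjTranspose_same (vecMul_injective_of_rank_eq_card_height hB)

theorem range_mulVecLin_le_ker_of_mul_eq_zero [Fintype n] [Fintype p] {B : Matrix m n R}
    {C : Matrix n p R} (hBC : B * C = 0) :
    LinearMap.range C.mulVecLin ≤ LinearMap.ker B.mulVecLin := by
  rw [LinearMap.range_le_ker_iff, ← mulVecLin_mul, hBC, mulVecLin_zero]

theorem range_mulVecLin_eq_ker_of_mul_eq_zero [Fintype n] [Fintype p] {B : Matrix m n R}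
    {C : Matrix n p R} (hBC : B * C = 0) (hrank : B.rank + C.rank = Fintype.card n) :
    LinearMap.range C.mulVecLin = LinearMap.ker B.mulVecLin := by
  refine Submodule.eq_of_le_of_finrank_eq (range_mulVecLin_le_ker_of_mul_eq_zero hBC) ?_
  have := B.mulVecLin.finrank_range_add_finrank_ker
  rw [finrank_fintype_fun_eq_card] at this
  unfold rank at hrank
  omega

theorem mulVec_injective_fromRows_of_left [Fintype n] {C : Matrix m n R} (X : Matrix p n R)
    (hC : Function.Injective C.mulVec) : Function.Injective (fromRows C X).mulVec := by
  intro v w hvw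
  simp only [fromRows_mulVec] at hvw
  exact hC (congrArg (· ∘ Sum.inl) hvw)

section BlockLowerTriangular

variable [Fintype n] [Fintype p] [DecidableEq p] {B : Matrix m n R}
  {C : Matrix n q R} (D : Matrix p n R) {S : Matrix p p R}

theorem fromBlocks_mul_fromRows_eq_zero (hBC : B * C = 0) (hS : IsUnit S) :
    fromBlocks B 0 D S * fromRows C (-(S⁻¹ * (D * C))) = 0 := by
  rw [fromBlocks_mul_fromRows, hBC, Matrix.mul_neg S,
    mul_nonsing_inv_cancel_left _ _ ((isUnit_iff_isUnit_det S).1 hS)]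
  simp

theorem ker_fromBlocks_le_range_fromRows [Fintype q]
    (hC : LinearMap.ker B.mulVecLin ≤ LinearMap.range C.mulVecLin) (hS : IsUnit S) :
    LinearMap.ker (fromBlocks B 0 D S).mulVecLin ≤
      LinearMap.range (fromRows C (-(S⁻¹ * (D * C)))).mulVecLin := by
  intro x hx
  obtain ⟨u, v, rfl⟩ : ∃ u v, x = Sum.elim u v := ⟨_, _, (Sum.elim_comp_inl_inr x).symm⟩
  rw [LinearMap.mem_ker, mulVecLin_apply, fromBlocks_mulVec, Sum.elim_comp_inl,
    Sum.elim_comp_inr, zero_mulVec, add_zero, ← Sum.elim_zero_zero, Sum.elim_eq_iff] at hx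
  obtain ⟨hBu, hDuSv⟩ := hx
  obtain ⟨w, rfl⟩ := hC hBu
  have hv : v = -(S⁻¹ * (D * C)) *ᵥ w := by
    apply mulVec_injective_of_isUnit hS
    rw [mulVec_mulVec, Matrix.mul_neg, mul_nonsing_inv_cancel_left _ _
      ((isUnit_iff_isUnit_det S).1 hS), neg_mulVec, ← mulVec_mulVec]
    exact eq_neg_of_add_eq_zero_right hDuSv
  exact ⟨w, by simp [fromRows_mulVec, hv]⟩

end BlockLowerTriangular

end Matrix

/-- With `C` a full-column-rank kernel matrix of `B` and
`C₂ = -(B M⁻¹ Bᵀ)⁻¹ B M⁻¹ K C`, the stacked matrix `T₂ = [C; C₂]` satisfies `Â₂ T₂ = 0`,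
has rank `n - m`, and its column space equals the kernel of `Â₂`, where
`Â₂ = [[B, 0], [B M⁻¹ K, B M⁻¹ Bᵀ]]`. -/
theorem T2_parametrizes_kernel (n m : ℕ) (hmn : m ≤ n)
    (M K : Matrix (Fin n) (Fin n) ℝ) (hM : M.PosDef)
    (B : Matrix (Fin m) (Fin n) ℝ) (hB : B.rank = m)
    (C : Matrix (Fin n) (Fin (n - m)) ℝ) (hBC : B * C = 0) (hC : C.rank = n - m) :
    fromBlocks B (0 : Matrix (Fin m) (Fin m) ℝ) (B * M⁻¹ * K) (B * M⁻¹ * Bᵀ) *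
        fromRows C (-((B * M⁻¹ * Bᵀ)⁻¹ * (B * M⁻¹ * K * C))) = 0 ∧
    (fromRows C (-((B * M⁻¹ * Bᵀ)⁻¹ * (B * M⁻¹ * K * C)))).rank = n - m ∧
    LinearMap.range
        (fromRows C (-((B * M⁻¹ * Bᵀ)⁻¹ * (B * M⁻¹ * K * C)))).mulVecLin =
      LinearMap.ker
        (fromBlocks B (0 : Matrix (Fin m) (Fin m) ℝ)
          (B * M⁻¹ * K) (B * M⁻¹ * Bᵀ)).mulVecLin := by
  have hS : IsUnit (B * M⁻¹ * Bᵀ) :=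
    (hM.inv.mul_mul_transpose_of_rank_eq_s18 (by rwa [Fintype.card_fin])).isUnit
  have hCinj : Function.Injective C.mulVec :=
    rank_eq_card_width_iff_mulVec_injective.1 (by rwa [Fintype.card_fin])
  have hrange : LinearMap.range C.mulVecLin = LinearMap.ker B.mulVecLin :=
    range_mulVecLin_eq_ker_of_mul_eq_zero hBC (by rw [hB, hC, Fintype.card_fin]; omega)
  have hzero := fromBlocks_mul_fromRows_eq_zero (B * M⁻¹ * K) hBC hS
  refine ⟨hzero, ?_, le_antisymm (range_mulVecLin_le_ker_of_mul_eq_zero hzero)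
    (ker_fromBlocks_le_range_fromRows _ hrange.ge hS)⟩
  simpa using rank_eq_card_width_iff_mulVec_injective.2
    (mulVec_injective_fromRows_of_left (-((B * M⁻¹ * Bᵀ)⁻¹ * (B * M⁻¹ * K * C))) hCinj)
end
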